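/- Under the stated boundedness assumptions: (a) the sequence {d^k} is bounded, and hence so is {y^k}; moreover ‖d^k‖² ≤ (20/μ̲)(Θ_k(x^k) − Θ_k(y^k)) for all k ≥ k̄; and (b) for every k ≥ k̄ one has α_k ≥ α_min := min{1, β(μ̲ − 2σ)/(2L_f)} and F(x^k) − F(x^{k+1}) ≥ σ α_min ‖x^{k+1} − x^k‖². -/

import Mathlib

open Set Filter
open scoped RealInnerProductSpace ENNReal

noncomputable section

attribute [local instance] Classical.propDecidable

variable {X : Type*} [NormedAddCommGroup X] [InnerProductSpace ℝ X] [FiniteDimensional ℝ X]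

/-- `g` extended by `+∞` outside its domain `s`. -/
def extE (g : X → ℝ) (s : Set X) (x : X) : EReal := if x ∈ s then (g x : EReal) else ⊤

/-- The objective `F = f + g`, extended-real valued. -/
def FE (f g : X → ℝ) (s : Set X) (x : X) : EReal := (f x : EReal) + extE g s x

/-- The strongly convex model `Θ_k` with base point `xk` and metric `G`, evaluated at `z`. -/
def Theta (f g : X → ℝ) (fgrad : X → X) (G : X →L[ℝ] X) (xk z : X) : ℝ :=
  f xk + ⟪fgrad xk, z - xk⟫ + (1/2) * ⟪z - xk, G (z - xk)⟫ + g z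

/-!
The model `Θ_k` is `μ`-strongly convex (its quadratic part has Hessian `𝒢_k ⪰ μ I` and `g` is
convex), so it grows quadratically away from its minimizer `x̄^k`; with the inexactness criterion
and the triangle inequality through `x̄^k` this bounds `‖d^k‖²` by the model decrease.

The model decrease `Θ_k(y^k) < Θ_k(x^k)`, the descent lemma for the `L_f`-Lipschitz gradient and
convexity of `g` give `F(x^k + t d^k) ≤ F(x^k) - t (μ/2 - L_f t/2) ‖d^k‖²` for `t ∈ [0, 1]`, so the
Armijo test can only fail at `t > (μ - 2σ)/L_f`; the accepted step `β^{m_k}` is therefore at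
least `β` times that. Sufficient decrease then holds in both branches of the update because
`α_min ≤ α_k ≤ 1`.
-/

open Topology

section StrongConvexity

variable {E : Type*} [NormedAddCommGroup E] [InnerProductSpace ℝ E]

theorem strongConvexOn_quadratic {s : Set E} (hs : Convex ℝ s) {μ : ℝ} {T : E →L[ℝ] E}
    (hT : ∀ u, μ * ‖u‖ ^ 2 ≤ ⟪u, T u⟫) (r : ℝ) (v c : E) :
    StrongConvexOn s μ fun z ↦ r + ⟪v, z - c⟫ + 1 / 2 * ⟪z - c, T (z - c)⟫ := by
  refine ⟨hs, fun x _ y _ a b ha hb hab ↦ ?_⟩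
  have hcomb : a • x + b • y - c = a • (x - c) + b • (y - c) := by
    linear_combination (norm := module) hab • c
  have hq := hT ((x - c) - (y - c))
  dsimp only
  rw [show x - y = (x - c) - (y - c) by abel, hcomb]
  simp only [smul_eq_mul, map_add, map_sub, map_smul, inner_add_left, inner_add_right,
    inner_sub_left, inner_sub_right, real_inner_smul_left, real_inner_smul_right] at hq ⊢
  obtain rfl := eq_sub_of_add_eq hab
  nlinarith [mul_nonneg ha hb]

theorem StrongConvexOn.sq_norm_sub_le_of_isMinOn {s : Set E} {m : ℝ} {f : E → ℝ}
    (hf : StrongConvexOn s m f) {a z : E} (ha : a ∈ s) (hmin : IsMinOn f s a) (hz : z ∈ s) :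
    m / 2 * ‖z - a‖ ^ 2 ≤ f z - f a := by
  have key : ∀ t ∈ Ioc (0 : ℝ) 1, (1 - t) * (m / 2 * ‖z - a‖ ^ 2) ≤ f z - f a := by
    rintro t ⟨ht0, ht1⟩
    have hconv := hf.2 ha hz (sub_nonneg.2 ht1) ht0.le (sub_add_cancel 1 t)
    have hle := isMinOn_iff.1 hmin _ (hf.1 ha hz (sub_nonneg.2 ht1) ht0.le (sub_add_cancel 1 t))
    rw [norm_sub_rev] at hconv
    simp only [smul_eq_mul] at hconv
    nlinarith
  have hlim : Tendsto (fun t : ℝ ↦ (1 - t) * (m / 2 * ‖z - a‖ ^ 2)) (𝓝[>] 0)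
      (𝓝 (m / 2 * ‖z - a‖ ^ 2)) := by
    have hcont : Continuous fun t : ℝ ↦ (1 - t) * (m / 2 * ‖z - a‖ ^ 2) := by fun_prop
    simpa using (hcont.tendsto 0).mono_left nhdsWithin_le_nhds
  exact le_of_tendsto hlim (eventually_of_mem (Ioc_mem_nhdsGT one_pos) key)

theorem StrongConvexOn.sq_norm_sub_le_of_sub_min_le {s : Set E} {m : ℝ} {f : E → ℝ}
    (hf : StrongConvexOn s m f) (hm : 0 < m) {a x y : E} (ha : a ∈ s) (hmin : IsMinOn f s a)
    (hx : x ∈ s) (hy : y ∈ s) (hya : f y - f a ≤ m / 10 * ‖y - x‖ ^ 2) :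
    ‖y - x‖ ^ 2 ≤ 20 / m * (f x - f y) := by
  have hxa := hf.sq_norm_sub_le_of_isMinOn ha hmin hx
  have hya' := hf.sq_norm_sub_le_of_isMinOn ha hmin hy
  have htri : ‖y - x‖ ≤ ‖y - a‖ + ‖x - a‖ := by
    simpa [norm_sub_rev a x] using norm_sub_le_norm_sub_add_norm_sub y a x
  have hsq : ‖y - x‖ ^ 2 ≤ 2 * ‖y - a‖ ^ 2 + 2 * ‖x - a‖ ^ 2 := by
    nlinarith [norm_nonneg (y - x), sq_nonneg (‖y - a‖ - ‖x - a‖)]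
  rw [div_mul_eq_mul_div, le_div_iff₀ hm]
  nlinarith

end StrongConvexity

section Descent

variable {E : Type*} [NormedAddCommGroup E] [InnerProductSpace ℝ E] [CompleteSpace E]

theorem HasGradientAt.hasDerivAt_comp_add_smul {f : E → ℝ} {f' x v : E} {t : ℝ}
    (hf : HasGradientAt f f' (x + t • v)) :
    HasDerivAt (fun t : ℝ ↦ f (x + t • v)) ⟪f', v⟫ t := by
  have hline : HasDerivAt (fun t : ℝ ↦ x + t • v) v t := by
    simpa using ((hasDerivAt_id t).smul_const v).const_add x
  exact (hasGradientAt_iff_hasFDerivAt.1 hf).comp_hasDerivAt t hline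

theorem Convex.le_add_inner_add_of_lipschitzOnWith_gradient {s : Set E} (hs : Convex ℝ s)
    {f : E → ℝ} {f' : E → E} (hf : ∀ z ∈ s, HasGradientAt f (f' z) z) {L : NNReal}
    (hL : LipschitzOnWith L f' s) {x y : E} (hx : x ∈ s) (hy : y ∈ s) :
    f y ≤ f x + ⟪f' x, y - x⟫ + L / 2 * ‖y - x‖ ^ 2 := by
  set v := y - x
  have hseg : ∀ t ∈ Icc (0 : ℝ) 1, x + t • v ∈ s := fun t ht ↦ hs.add_smul_sub_mem hx hy ht
  have hderiv : ∀ t ∈ Icc (0 : ℝ) 1, HasDerivAt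
      (fun t : ℝ ↦ f (x + t • v) - t * ⟪f' x, v⟫ - t ^ 2 * (L / 2 * ‖v‖ ^ 2))
      (⟪f' (x + t • v), v⟫ - ⟪f' x, v⟫ - 2 * t * (L / 2 * ‖v‖ ^ 2)) t := fun t ht ↦ by
    refine ((((hf _ (hseg t ht)).hasDerivAt_comp_add_smul).sub
      ((hasDerivAt_id t).mul_const ⟪f' x, v⟫)).sub
      ((hasDerivAt_pow 2 t).mul_const (L / 2 * ‖v‖ ^ 2))).congr_deriv ?_
    simp
  have hanti := antitoneOn_of_hasDerivWithinAt_nonpos (convex_Icc 0 1)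
    (fun t ht ↦ (hderiv t ht).continuousAt.continuousWithinAt)
    (fun t ht ↦ (hderiv t (interior_subset ht)).hasDerivWithinAt) fun t ht ↦ by
      have ht' := interior_subset ht
      rw [interior_Icc] at ht
      have hlip : ‖f' (x + t • v) - f' x‖ ≤ L * (t * ‖v‖) := by
        simpa [norm_smul, abs_of_pos ht.1] using hL.norm_sub_le (hseg t ht') hx
      have := real_inner_le_norm (f' (x + t • v) - f' x) v
      rw [inner_sub_left] at this
      nlinarith [norm_nonneg v]
  have := hanti (left_mem_Icc.2 zero_le_one) (right_mem_Icc.2 zero_le_one) zero_le_one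
  simp [v] at this
  linarith

end Descent

theorem min_le_pow_of_armijo_fails {β σ μ L A : ℝ} (hβ0 : 0 < β) (hL : 0 < L)
    (hA : 0 ≤ A) {m : ℕ}
    (hfail : ∀ j < m, β ^ j * (μ / 2) * A - L / 2 * (β ^ j) ^ 2 * A < σ * β ^ j * A) :
    min 1 ((μ - 2 * σ) / (2 * L) * β) ≤ β ^ m := by
  rcases m with _ | j
  · simp
  have ht : 0 < β ^ j := pow_pos hβ0 j
  have hfailj := hfail j j.lt_succ_self
  have hApos : 0 < A := hA.lt_of_ne fun h ↦ by simp [← h] at hfailj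
  -- divide the failed test by `β ^ j * A > 0`
  have hlarge : μ - 2 * σ < L * β ^ j := by nlinarith [mul_pos ht hApos]
  have hle : (μ - 2 * σ) / (2 * L) ≤ β ^ j := by
    rw [div_le_iff₀ (by positivity)]
    nlinarith
  calc min 1 ((μ - 2 * σ) / (2 * L) * β) ≤ (μ - 2 * σ) / (2 * L) * β := min_le_right _ _
    _ ≤ β ^ j * β := by gcongr
    _ = β ^ (j + 1) := (pow_succ β j).symm

theorem FE_of_mem {E : Type*} {f g : E → ℝ} {domg : Set E} {z : E} (hz : z ∈ domg) :
    FE f g domg z = ((f z + g z : ℝ) : EReal) := by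
  simp [FE, extE, hz]

section Model

variable {E : Type*} [NormedAddCommGroup E] [InnerProductSpace ℝ E]
  {f g : E → ℝ} {fgrad : E → E} {G : E →L[ℝ] E} {domg : Set E} {μ : ℝ}

theorem Theta_self (xk : E) : Theta f g fgrad G xk xk = f xk + g xk := by
  simp [Theta]

theorem strongConvexOn_Theta (hg : ConvexOn ℝ domg g) (hG : ∀ u, μ * ‖u‖ ^ 2 ≤ ⟪u, G u⟫)
    (xk : E) : StrongConvexOn domg μ (Theta f g fgrad G xk) := by
  have h := (strongConvexOn_quadratic hg.1 hG (f xk) (fgrad xk) xk).add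
    hg.uniformConvexOn_zero
  rw [add_zero] at h
  exact h

theorem inner_add_sub_le_of_Theta_lt (hG : ∀ u, μ * ‖u‖ ^ 2 ≤ ⟪u, G u⟫) {xk y : E}
    (hy : Theta f g fgrad G xk y < Theta f g fgrad G xk xk) :
    ⟪fgrad xk, y - xk⟫ + g y - g xk ≤ -(μ / 2 * ‖y - xk‖ ^ 2) := by
  rw [Theta_self] at hy
  have := hG (y - xk)
  simp only [Theta] at hy
  linarith

variable [CompleteSpace E]

theorem add_le_of_Theta_lt (hg : ConvexOn ℝ domg g) (hG : ∀ u, μ * ‖u‖ ^ 2 ≤ ⟪u, G u⟫)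
    {Γ : Set E} (hΓ : Convex ℝ Γ) (hf : ∀ z ∈ Γ, HasGradientAt f (fgrad z) z) {L : NNReal}
    (hL : LipschitzOnWith L fgrad Γ) {xk y : E} (hxk : xk ∈ domg ∩ Γ) (hy : y ∈ domg ∩ Γ)
    (hΘ : Theta f g fgrad G xk y < Theta f g fgrad G xk xk) {t : ℝ} (ht : t ∈ Icc (0 : ℝ) 1) :
    f (xk + t • (y - xk)) + g (xk + t • (y - xk))
      ≤ f xk + g xk - t * (μ / 2) * ‖y - xk‖ ^ 2 + L / 2 * t ^ 2 * ‖y - xk‖ ^ 2 := by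
  have hdescent := hΓ.le_add_inner_add_of_lipschitzOnWith_gradient hf hL hxk.2
    (hΓ.add_smul_sub_mem hxk.2 hy.2 ht)
  have hgconv : g (xk + t • (y - xk)) ≤ (1 - t) * g xk + t * g y := by
    have := hg.2 hxk.1 hy.1 (sub_nonneg.2 ht.2) ht.1 (sub_add_cancel 1 t)
    simpa [smul_sub, sub_smul, add_sub_left_comm, add_comm] using this
  have hmodel := mul_le_mul_of_nonneg_left (inner_add_sub_le_of_Theta_lt hG hΘ) ht.1
  simp only [add_sub_cancel_left, inner_smul_right, norm_smul, Real.norm_eq_abs,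
    abs_of_nonneg ht.1, mul_pow] at hdescent
  nlinarith

theorem min_le_pow_of_backtracking (hg : ConvexOn ℝ domg g) (hG : ∀ u, μ * ‖u‖ ^ 2 ≤ ⟪u, G u⟫)
    {Γ : Set E} (hΓ : Convex ℝ Γ) (hf : ∀ z ∈ Γ, HasGradientAt f (fgrad z) z) {L : ℝ}
    (hL : 0 < L) (hLip : LipschitzOnWith (Real.toNNReal L) fgrad Γ) {xk y : E}
    (hxk : xk ∈ domg ∩ Γ) (hy : y ∈ domg ∩ Γ)
    (hΘ : Theta f g fgrad G xk y < Theta f g fgrad G xk xk) {β σ : ℝ} (hβ0 : 0 < β)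
    (hβ1 : β ≤ 1) {m : ℕ} (hfail : ∀ j < m, ¬ (FE f g domg (xk + β ^ j • (y - xk))
        ≤ ((f xk + g xk - σ * β ^ j * ‖y - xk‖ ^ 2 : ℝ) : EReal))) :
    min 1 ((μ - 2 * σ) / (2 * L) * β) ≤ β ^ m := by
  refine min_le_pow_of_armijo_fails (A := ‖y - xk‖ ^ 2) hβ0 hL (sq_nonneg _) fun j hj ↦ ?_
  have ht : β ^ j ∈ Icc (0 : ℝ) 1 := ⟨pow_nonneg hβ0.le j, pow_le_one₀ hβ0.le hβ1⟩
  have hfailj := hfail j hj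
  rw [FE_of_mem (hg.1.add_smul_sub_mem hxk.1 hy.1 ht), EReal.coe_le_coe_iff, not_le] at hfailj
  have hbound := add_le_of_Theta_lt hg hG hΓ hf hLip hxk hy hΘ ht
  rw [Real.coe_toNNReal _ hL.le] at hbound
  linarith

end Model

theorem FE_add_le_of_update {E : Type*} [NormedAddCommGroup E] [NormedSpace ℝ E]
    {f g : E → ℝ} {domg : Set E} {x y x' : E} (hx : x ∈ domg) {α αmin σ : ℝ} (hσ : 0 ≤ σ)
    (hα : α ∈ Icc (0 : ℝ) 1) (hαmin : αmin ≤ α) (hαmin1 : αmin ≤ 1)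
    (hls : FE f g domg (x + α • (y - x)) ≤ ((f x + g x - σ * α * ‖y - x‖ ^ 2 : ℝ) : EReal))
    (hupd : (FE f g domg y < FE f g domg (x + α • (y - x)) ∧ x' = y) ∨
      ((¬ FE f g domg y < FE f g domg (x + α • (y - x))) ∧ x' = x + α • (y - x))) :
    FE f g domg x' + ((σ * αmin * ‖x' - x‖ ^ 2 : ℝ) : EReal) ≤ FE f g domg x := by
  have hnext : FE f g domg x' ≤ FE f g domg (x + α • (y - x)) ∧
      αmin * ‖x' - x‖ ^ 2 ≤ α * ‖y - x‖ ^ 2 := by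
    rcases hupd with ⟨hlt, rfl⟩ | ⟨-, rfl⟩
    · exact ⟨hlt.le, by gcongr⟩
    · refine ⟨le_rfl, ?_⟩
      rw [add_sub_cancel_left, norm_smul, Real.norm_eq_abs, abs_of_nonneg hα.1, mul_pow]
      have : αmin * α ≤ 1 := by nlinarith [hα.1, hα.2]
      nlinarith [mul_nonneg (mul_nonneg hα.1 (sq_nonneg ‖y - x‖)) (sub_nonneg.2 this)]
  calc FE f g domg x' + ((σ * αmin * ‖x' - x‖ ^ 2 : ℝ) : EReal)
      ≤ ((f x + g x - σ * α * ‖y - x‖ ^ 2 : ℝ) : EReal)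
        + ((σ * α * ‖y - x‖ ^ 2 : ℝ) : EReal) := by
        refine add_le_add (hnext.1.trans hls) (EReal.coe_le_coe_iff.2 ?_)
        nlinarith [mul_le_mul_of_nonneg_left hnext.2 hσ]
    _ = FE f g domg x := by rw [FE_of_mem hx, ← EReal.coe_add, sub_add_cancel]

theorem vmipg_stepsize_decrease_general
    (f g : X → ℝ) (domg O : Set X) (fgrad : X → X)
    (hgconv : ConvexOn ℝ domg g)
    (hfgrad : ∀ z ∈ O, HasGradientAt f (fgrad z) z)
    (μ σ β : ℝ) (hμ : 0 < μ) (hβ : 0 < β ∧ β < 1) (hσ : 0 < σ ∧ σ < (1/2) * min 1 μ)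
    (eps : ℕ → ℝ)
    (kbar : ℕ) (hkbar : ∀ k, kbar ≤ k → eps k ≤ μ / 10)
    (x y xbar : ℕ → X) (G : ℕ → X →L[ℝ] X) (m : ℕ → ℕ)
    (hx0 : x 0 ∈ domg)
    (hGlb : ∀ k, ∀ u : X, μ * ‖u‖ ^ 2 ≤ ⟪u, G k u⟫)
    (hxbar : ∀ k, xbar k ∈ domg ∧ ∀ z ∈ domg,
      Theta f g fgrad (G k) (x k) (xbar k) ≤ Theta f g fgrad (G k) (x k) z)
    (hy : ∀ k, y k ∈ domg ∧
      Theta f g fgrad (G k) (x k) (y k) < Theta f g fgrad (G k) (x k) (x k) ∧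
      Theta f g fgrad (G k) (x k) (y k) - Theta f g fgrad (G k) (x k) (xbar k)
        ≤ eps k * ‖y k - x k‖ ^ 2)
    (hls : ∀ k,
      (FE f g domg (x k + β ^ (m k) • (y k - x k))
        ≤ ((f (x k) + g (x k) - σ * β ^ (m k) * ‖y k - x k‖ ^ 2 : ℝ) : EReal)) ∧
      ∀ j < m k, ¬ (FE f g domg (x k + β ^ j • (y k - x k))
        ≤ ((f (x k) + g (x k) - σ * β ^ j * ‖y k - x k‖ ^ 2 : ℝ) : EReal)))
    (hupd : ∀ k,
      (FE f g domg (y k) < FE f g domg (x k + β ^ (m k) • (y k - x k)) ∧ x (k+1) = y k) ∨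
      ((¬ FE f g domg (y k) < FE f g domg (x k + β ^ (m k) • (y k - x k))) ∧
        x (k+1) = x k + β ^ (m k) • (y k - x k)))
    (Γ : Set X) (hΓc : IsCompact Γ) (hΓconv : Convex ℝ Γ) (hΓO : Γ ⊆ O)
    (hΓx : ∀ k, x k ∈ Γ) (hΓy : ∀ k, y k ∈ Γ)
    (Lf : ℝ) (hLf : 0 < Lf) (hLip : LipschitzOnWith (Real.toNNReal Lf) fgrad Γ)
    :
    ((∃ R : ℝ, ∀ k, ‖y k - x k‖ ≤ R) ∧ (∃ R : ℝ, ∀ k, ‖y k‖ ≤ R)) ∧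
    (∀ k, kbar ≤ k →
      ‖y k - x k‖ ^ 2 ≤ (20 / μ) *
        (Theta f g fgrad (G k) (x k) (x k) - Theta f g fgrad (G k) (x k) (y k))) ∧
    (∀ k, kbar ≤ k →
      min 1 ((μ - 2 * σ) / (2 * Lf) * β) ≤ β ^ (m k) ∧
      FE f g domg (x (k + 1)) +
          ((σ * min 1 ((μ - 2 * σ) / (2 * Lf) * β) * ‖x (k + 1) - x k‖ ^ 2 : ℝ) : EReal)
        ≤ FE f g domg (x k)) := by
  have hα : ∀ k, β ^ m k ∈ Icc (0 : ℝ) 1 := fun k ↦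
    ⟨pow_nonneg hβ.1.le _, pow_le_one₀ hβ.1.le hβ.2.le⟩
  have hxdom : ∀ k, x k ∈ domg := by
    intro k
    induction k with
    | zero => exact hx0
    | succ k ih =>
      rcases hupd k with ⟨-, h⟩ | ⟨-, h⟩ <;> rw [h]
      · exact (hy k).1
      · exact hgconv.1.add_smul_sub_mem ih (hy k).1 (hα k)
  have hstep : ∀ k, min 1 ((μ - 2 * σ) / (2 * Lf) * β) ≤ β ^ m k := fun k ↦
    min_le_pow_of_backtracking hgconv (hGlb k) hΓconv (fun z hz ↦ hfgrad z (hΓO hz)) hLf hLip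
      ⟨hxdom k, hΓx k⟩ ⟨(hy k).1, hΓy k⟩ (hy k).2.1 hβ.1 hβ.2.le (hls k).2
  obtain ⟨R, hR⟩ := hΓc.isBounded.exists_norm_le
  refine ⟨⟨⟨R + R, fun k ↦ (norm_sub_le _ _).trans (add_le_add (hR _ (hΓy k)) (hR _ (hΓx k)))⟩,
    ⟨R, fun k ↦ hR _ (hΓy k)⟩⟩, fun k hk ↦ ?_, fun k _ ↦ ⟨hstep k, ?_⟩⟩
  · obtain ⟨hxb, hmin⟩ := hxbar k
    obtain ⟨hyk, -, hinexact⟩ := hy k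
    exact (strongConvexOn_Theta hgconv (hGlb k) (x k)).sq_norm_sub_le_of_sub_min_le hμ hxb
      (isMinOn_iff.2 hmin) (hxdom k) hyk
      (hinexact.trans (mul_le_mul_of_nonneg_right (hkbar k hk) (sq_nonneg _)))
  · exact FE_add_le_of_update (hxdom k) hσ.1.le (hα k) (hstep k) (min_le_left _ _) (hls k).1
      (hupd k)

/-- boundedness of `{d^k}` and `{y^k}`, the bound
`‖d^k‖² ≤ (20/μ)(Θ_k(x^k) - Θ_k(y^k))`, the step-size lower bound, and the sufficient
decrease of `F`. -/
theorem vmipg_stepsize_decrease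
    (f g : X → ℝ) (domg O : Set X) (fgrad : X → X)
    (hdom : domg.Nonempty) (hO : IsOpen O) (hclO : closure domg ⊆ O)
    (hgconv : ConvexOn ℝ domg g) (hgcont : ContinuousOn g domg)
    (hglsc : LowerSemicontinuous (extE g domg))
    (hflsc : LowerSemicontinuous f)
    (hfC2 : ContDiffOn ℝ 2 f O)
    (hfgrad : ∀ z ∈ O, HasGradientAt f (fgrad z) z)
    (hFlb : ∃ c : ℝ, ∀ z ∈ domg, c ≤ f z + g z)
    (μ σ β : ℝ) (hμ : 0 < μ) (hβ : 0 < β ∧ β < 1) (hσ : 0 < σ ∧ σ < (1/2) * min 1 μ)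
    (eps : ℕ → ℝ) (heps : ∀ k, 0 < eps k) (hepsbd : ∃ C : ℝ, ∀ k, eps k ≤ C)
    (kbar : ℕ) (hkbar : ∀ k, kbar ≤ k → eps k ≤ μ / 10)
    (x y xbar : ℕ → X) (G : ℕ → X →L[ℝ] X) (m : ℕ → ℕ)
    (hx0 : x 0 ∈ domg)
    (hGsa : ∀ k, ∀ u v : X, ⟪G k u, v⟫ = ⟪u, G k v⟫)
    (hGlb : ∀ k, ∀ u : X, μ * ‖u‖ ^ 2 ≤ ⟪u, G k u⟫)
    (hxbar : ∀ k, xbar k ∈ domg ∧ ∀ z ∈ domg,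
      Theta f g fgrad (G k) (x k) (xbar k) ≤ Theta f g fgrad (G k) (x k) z)
    (hy : ∀ k, y k ∈ domg ∧
      Theta f g fgrad (G k) (x k) (y k) < Theta f g fgrad (G k) (x k) (x k) ∧
      Theta f g fgrad (G k) (x k) (y k) - Theta f g fgrad (G k) (x k) (xbar k)
        ≤ eps k * ‖y k - x k‖ ^ 2)
    (hls : ∀ k,
      (FE f g domg (x k + β ^ (m k) • (y k - x k))
        ≤ ((f (x k) + g (x k) - σ * β ^ (m k) * ‖y k - x k‖ ^ 2 : ℝ) : EReal)) ∧
      ∀ j < m k, ¬ (FE f g domg (x k + β ^ j • (y k - x k))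
        ≤ ((f (x k) + g (x k) - σ * β ^ j * ‖y k - x k‖ ^ 2 : ℝ) : EReal)))
    (hupd : ∀ k,
      (FE f g domg (y k) < FE f g domg (x k + β ^ (m k) • (y k - x k)) ∧ x (k+1) = y k) ∨
      ((¬ FE f g domg (y k) < FE f g domg (x k + β ^ (m k) • (y k - x k))) ∧
        x (k+1) = x k + β ^ (m k) • (y k - x k)))
    (hxbdd : ∃ R : ℝ, ∀ k, ‖x k‖ ≤ R)
    (μbar : ℝ) (hμbar : 0 < μbar) (hGub : ∀ k, ‖G k‖ ≤ μbar)
    (Γ : Set X) (hΓc : IsCompact Γ) (hΓconv : Convex ℝ Γ) (hΓO : Γ ⊆ O)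
    (hΓx : ∀ k, x k ∈ Γ) (hΓy : ∀ k, y k ∈ Γ)
    (Lf : ℝ) (hLf : 0 < Lf) (hLip : LipschitzOnWith (Real.toNNReal Lf) fgrad Γ)
    :
    ((∃ R : ℝ, ∀ k, ‖y k - x k‖ ≤ R) ∧ (∃ R : ℝ, ∀ k, ‖y k‖ ≤ R)) ∧
    (∀ k, kbar ≤ k →
      ‖y k - x k‖ ^ 2 ≤ (20 / μ) *
        (Theta f g fgrad (G k) (x k) (x k) - Theta f g fgrad (G k) (x k) (y k))) ∧
    (∀ k, kbar ≤ k →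
      min 1 ((μ - 2 * σ) / (2 * Lf) * β) ≤ β ^ (m k) ∧
      FE f g domg (x (k + 1)) +
          ((σ * min 1 ((μ - 2 * σ) / (2 * Lf) * β) * ‖x (k + 1) - x k‖ ^ 2 : ℝ) : EReal)
        ≤ FE f g domg (x k)) :=
  vmipg_stepsize_decrease_general f g domg O fgrad hgconv hfgrad μ σ β hμ hβ hσ eps kbar hkbar x y
    xbar G m hx0 hGlb hxbar hy hls hupd Γ hΓc hΓconv hΓO hΓx hΓy Lf hLf hLip
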